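/- arXiv:1411.4592 — 4 statements merged into one kernel-verified Lean document; each statement's English description precedes it below -/
import Mathlib

section
/- Let n ≥ 2, let H be an invertible n×n real Hankel matrix, and let u = (u₁,…,u_{n+1}) ∈ ℝ^{n+1} with u₁ ≠ 0 and u_{n+1} ≠ 0. Then the reversed vector u^J lies in the kernel of ∂H if and only if both C_b(u)·H and H·C_r(u^J) are Hankel matrices and C_b(u)·H = H·C_r(u^J). -/
open Matrix Polynomial

noncomputable section

/-- Top companion matrix of `u`. -/
def Ct (n : ℕ) (u : Fin (n + 1) → ℝ) : Matrix (Fin n) (Fin n) ℝ :=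
  Matrix.of fun i j =>
    if i.val = 0 then -u ⟨n - 1 - j.val, by omega⟩ / u (Fin.last n)
    else if j.val + 1 = i.val then 1 else 0

/-- Bottom companion matrix of `u`. -/
def Cb (n : ℕ) (u : Fin (n + 1) → ℝ) : Matrix (Fin n) (Fin n) ℝ :=
  Matrix.of fun i j =>
    if i.val = n - 1 then -u ⟨n - j.val, by omega⟩ / u 0
    else if j.val = i.val + 1 then 1 else 0

/-- Left companion matrix of `u`. -/
def Cl (n : ℕ) (u : Fin (n + 1) → ℝ) : Matrix (Fin n) (Fin n) ℝ :=
  Matrix.of fun i j =>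
    if j.val = 0 then -u ⟨i.val + 1, by have := i.isLt; omega⟩ / u 0
    else if i.val + 1 = j.val then 1 else 0

/-- Right companion matrix of `u`. -/
def Cr (n : ℕ) (u : Fin (n + 1) → ℝ) : Matrix (Fin n) (Fin n) ℝ :=
  Matrix.of fun i j =>
    if j.val = n - 1 then -u ⟨i.val, by have := i.isLt; omega⟩ / u (Fin.last n)
    else if i.val = j.val + 1 then 1 else 0

/-- A square matrix is Toeplitz if entries depend only on the difference of indices. -/
def IsToeplitz {n : ℕ} (T : Matrix (Fin n) (Fin n) ℝ) : Prop :=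
  ∀ (i j : Fin n) (hi : i.val + 1 < n) (hj : j.val + 1 < n),
    T ⟨i.val + 1, hi⟩ ⟨j.val + 1, hj⟩ = T i j

/-- A square matrix is Hankel if entries depend only on the sum of indices. -/
def IsHankel {n : ℕ} (H : Matrix (Fin n) (Fin n) ℝ) : Prop :=
  ∀ (i j : Fin n) (hi : i.val + 1 < n) (hj : j.val + 1 < n),
    H ⟨i.val + 1, hi⟩ j = H i ⟨j.val + 1, hj⟩

/-- `∂T` for a Toeplitz matrix `T`: the (n-1)×(n+1) matrix with entries `a_{i+1-j}`
(1-based), expressed via the entries of `T`. -/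
def dT {n : ℕ} (T : Matrix (Fin n) (Fin n) ℝ) : Matrix (Fin (n - 1)) (Fin (n + 1)) ℝ :=
  Matrix.of fun i j =>
    if j.val = 0 then
      T ⟨i.val + 1, by have := i.isLt; omega⟩ ⟨0, by have := i.isLt; omega⟩
    else
      T ⟨i.val, by have := i.isLt; omega⟩ ⟨j.val - 1, by have := i.isLt; have := j.isLt; omega⟩

/-- `∂H` for a Hankel matrix `H`: the (n-1)×(n+1) matrix with entries `a_{i+j-n-1}`
(1-based), expressed via the entries of `H`. -/
def dH {n : ℕ} (H : Matrix (Fin n) (Fin n) ℝ) : Matrix (Fin (n - 1)) (Fin (n + 1)) ℝ :=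
  Matrix.of fun i j =>
    if h : j.val < n then H ⟨i.val, by have := i.isLt; omega⟩ ⟨j.val, h⟩
    else H ⟨i.val + 1, by have := i.isLt; omega⟩ ⟨n - 1, by have := i.isLt; omega⟩

/-- The reversed vector `u^J`. -/
def revVec {m : ℕ} (u : Fin m → ℝ) : Fin m → ℝ := fun i => u i.rev

/-- The lower triangular Toeplitz matrix `U₊(u)` with first column `(u₁,…,u_n)ᵀ`. -/
def Uplus (n : ℕ) (u : Fin (n + 1) → ℝ) : Matrix (Fin n) (Fin n) ℝ :=
  Matrix.of fun i j =>
    if j.val ≤ i.val then u ⟨i.val - j.val, by have := i.isLt; omega⟩ else 0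

/-- The upper triangular Toeplitz matrix `U₋(u)` with first row `(u_{n+1},…,u₂)`. -/
def Uminus (n : ℕ) (u : Fin (n + 1) → ℝ) : Matrix (Fin n) (Fin n) ℝ :=
  Matrix.of fun i j =>
    if h : i.val ≤ j.val then u ⟨n + i.val - j.val, by have := j.isLt; omega⟩ else 0

/-- The flip (exchange) matrix `J`. -/
def Jmat (n : ℕ) : Matrix (Fin n) (Fin n) ℝ :=
  Matrix.of fun i j => if j = i.rev then 1 else 0

/-- The Toeplitz Bezoutian `B_T(u,v) = U₊(u)U₋(v) − U₊(v)U₋(u)`. -/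
def BT (n : ℕ) (u v : Fin (n + 1) → ℝ) : Matrix (Fin n) (Fin n) ℝ :=
  Uplus n u * Uminus n v - Uplus n v * Uminus n u

/-- The Hankel Bezoutian `B_H(u,v) = U₊(v)JU₋(u) − U₊(u)JU₋(v)`. -/
def BH (n : ℕ) (u v : Fin (n + 1) → ℝ) : Matrix (Fin n) (Fin n) ℝ :=
  Uplus n v * Jmat n * Uminus n u - Uplus n u * Jmat n * Uminus n v

/-- The polynomial `u(λ) = u₁ + u₂λ + ⋯ + u_{n+1}λⁿ` associated to a vector. -/
def polyOf {m : ℕ} (u : Fin m → ℝ) : Polynomial ℝ :=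
  ∑ i : Fin m, Polynomial.C (u i) * Polynomial.X ^ (i : ℕ)

/-! Since `Cr n (revVec u) = (Cb n u)ᵀ` and a Hankel matrix is symmetric, `H * Cr n (revVec u)`
is the transpose of `M = Cb n u * H`, so the right-hand side says that `M` is symmetric (and
Hankel). The first `n - 1` rows of `M` are the last `n - 1` rows of `H`, so `M` is symmetric iff
its last row equals its last column, and then it is automatically Hankel. Row `i` of
`dH H *ᵥ revVec u` is `u 0` times the difference of the `i`-th entries of the last column and
the last row. -/

namespace IsHankel

variable {n : ℕ} {H : Matrix (Fin n) (Fin n) ℝ}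

theorem apply_eq_of_add_eq (hH : IsHankel H) {i j i' j' : Fin n}
    (h : i.val + j.val = i'.val + j'.val) : H i j = H i' j' := by
  wlog hii' : i.val ≤ i'.val generalizing i j i' j'
  · exact (this h.symm (by omega)).symm
  obtain ⟨d, hd⟩ := Nat.exists_eq_add_of_le hii'
  induction d generalizing i j with
  | zero =>
    obtain rfl : i = i' := Fin.ext (by omega)
    obtain rfl : j = j' := Fin.ext (by omega)
    rfl
  | succ d ih =>
    calc H i j = H ⟨i.val + 1, by omega⟩ ⟨j.val - 1, by omega⟩ := by
          have := hH i ⟨j.val - 1, by omega⟩ (by omega) (by dsimp only; omega)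
          simp only [Nat.sub_add_cancel (show 1 ≤ j.val by omega)] at this
          exact this.symm
      _ = H i' j' := ih (by simp only; omega) (by simp only; omega) (by simp only; omega)

theorem transpose_eq (hH : IsHankel H) : Hᵀ = H :=
  Matrix.ext fun _ _ => hH.apply_eq_of_add_eq (add_comm _ _)

end IsHankel

theorem isHankel_transpose_iff {n : ℕ} {M : Matrix (Fin n) (Fin n) ℝ} :
    IsHankel Mᵀ ↔ IsHankel M :=
  ⟨fun h i j hi hj => (h j i hj hi).symm, fun h i j hi hj => (h j i hj hi).symm⟩

section Companion

variable {n : ℕ} (u : Fin (n + 1) → ℝ)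

theorem Cr_revVec : Cr n (revVec u) = (Cb n u)ᵀ := by
  ext i j
  have hrev : (⟨i.val, by omega⟩ : Fin (n + 1)).rev = ⟨n - i.val, by omega⟩ :=
    Fin.ext (by simp)
  simp [Cr, Cb, revVec, hrev, eq_comm (a := i.val)]

theorem Cb_mul_apply_of_lt {α : Type*} (H : Matrix (Fin n) α ℝ) (i : Fin n) (j : α)
    (hi : i.val + 1 < n) : (Cb n u * H) i j = H ⟨i.val + 1, hi⟩ j := by
  rw [mul_apply, Fintype.sum_eq_single ⟨i.val + 1, hi⟩]
  · simp [Cb, show i.val ≠ n - 1 by omega]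
  · intro k hk
    have : k.val ≠ i.val + 1 := fun h => hk (Fin.ext h)
    simp [Cb, show i.val ≠ n - 1 by omega, this]

theorem Cb_mul_apply_last {α : Type*} (H : Matrix (Fin n) α ℝ) (j : α) (hn : n - 1 < n) :
    (Cb n u * H) ⟨n - 1, hn⟩ j = -(∑ k : Fin n, u k.castSucc.rev * H k j) / u 0 := by
  rw [mul_apply, neg_div, Finset.sum_div, ← Finset.sum_neg_distrib]
  refine Finset.sum_congr rfl fun k _ => ?_
  have hrev : k.castSucc.rev = ⟨n - k.val, by omega⟩ := Fin.ext (by simp)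
  simp only [Cb, of_apply, if_pos, hrev]
  ring

end Companion

theorem dH_mulVec_revVec {n : ℕ} {H : Matrix (Fin n) (Fin n) ℝ} (hH : IsHankel H)
    {u : Fin (n + 1) → ℝ} (hu : u 0 ≠ 0) (i : Fin (n - 1)) :
    (dH H *ᵥ revVec u) i =
      u 0 * ((Cb n u * H) (i.castLE (n.sub_le 1)) ⟨n - 1, by have := i.isLt; omega⟩
        - (Cb n u * H) ⟨n - 1, by have := i.isLt; omega⟩ (i.castLE (n.sub_le 1))) := by
  rw [Cb_mul_apply_of_lt _ _ _ _ (by simp only [Fin.val_castLE]; omega), Cb_mul_apply_last,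
    mulVec, dotProduct, Fin.sum_univ_castSucc]
  have hsym : ∀ k, u k.castSucc.rev * H k (i.castLE (n.sub_le 1))
      = H (i.castLE (n.sub_le 1)) k * u k.castSucc.rev := fun k => by
    rw [mul_comm, hH.apply_eq_of_add_eq (add_comm _ _)]
  simp only [hsym, neg_div, sub_neg_eq_add, mul_add, mul_div_cancel₀ _ hu]
  simp only [dH, of_apply, Fin.val_castSucc, Fin.is_lt, dif_pos, Fin.val_last, lt_irrefl,
    dif_neg, not_false_eq_true, revVec, Fin.rev_last, Fin.castLE]
  ring

section ShiftedHankel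

variable {n : ℕ} {H M : Matrix (Fin n) (Fin n) ℝ}

theorem transpose_eq_self_iff_of_rows_shift (hH : IsHankel H)
    (hM : ∀ (i j : Fin n) (hi : i.val + 1 < n), M i j = H ⟨i.val + 1, hi⟩ j) :
    Mᵀ = M ↔ ∀ i : Fin (n - 1),
      M (i.castLE (n.sub_le 1)) ⟨n - 1, by have := i.isLt; omega⟩
        = M ⟨n - 1, by have := i.isLt; omega⟩ (i.castLE (n.sub_le 1)) := by
  refine ⟨fun h i => by rw [← transpose_apply M, h], fun h => ?_⟩
  have hsymm : ∀ i j : Fin n, i.val + 1 < n → M j i = M i j := by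
    intro i j hi
    by_cases hj : j.val + 1 < n
    · rw [hM i j hi, hM j i hj]
      exact hH.apply_eq_of_add_eq (by simp only; omega)
    · rw [show j = ⟨n - 1, by omega⟩ from Fin.ext (by simp only; omega)]
      exact (h ⟨i.val, by omega⟩).symm
  ext i j
  rw [transpose_apply]
  by_cases hi : i.val + 1 < n
  · exact hsymm i j hi
  by_cases hj : j.val + 1 < n
  · exact (hsymm j i hj).symm
  · rw [Fin.ext (show j.val = i.val by omega)]

theorem isHankel_of_transpose_eq_self_of_rows_shift (hH : IsHankel H)
    (hM : ∀ (i j : Fin n) (hi : i.val + 1 < n), M i j = H ⟨i.val + 1, hi⟩ j)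
    (hMt : Mᵀ = M) : IsHankel M := by
  intro i j hi hj
  rw [hM i _ hi, ← hMt, transpose_apply, hM j _ hj]
  exact hH.apply_eq_of_add_eq (by simp only; omega)

end ShiftedHankel

theorem hankel_similarity_bottom_right_general
    (n : ℕ) (H : Matrix (Fin n) (Fin n) ℝ)
    (hH : IsHankel H)
    (u : Fin (n + 1) → ℝ) (hu1 : u 0 ≠ 0) :
    (dH H).mulVec (revVec u) = 0 ↔
      (IsHankel (Cb n u * H) ∧ IsHankel (H * Cr n (revVec u)) ∧
        Cb n u * H = H * Cr n (revVec u)) := by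
  have hrows := Cb_mul_apply_of_lt u H
  have htr : H * Cr n (revVec u) = (Cb n u * H)ᵀ := by
    rw [Cr_revVec, transpose_mul, hH.transpose_eq]
  rw [htr, isHankel_transpose_iff, and_self_left, eq_comm (a := Cb n u * H)]
  calc dH H *ᵥ revVec u = 0
      ↔ ∀ i : Fin (n - 1),
          (Cb n u * H) (i.castLE (n.sub_le 1)) ⟨n - 1, by have := i.isLt; omega⟩
            = (Cb n u * H) ⟨n - 1, by have := i.isLt; omega⟩ (i.castLE (n.sub_le 1)) := by
        simp only [funext_iff, Pi.zero_apply, dH_mulVec_revVec hH hu1, mul_eq_zero, hu1,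
          false_or, sub_eq_zero]
    _ ↔ (Cb n u * H)ᵀ = Cb n u * H := (transpose_eq_self_iff_of_rows_shift hH hrows).symm
    _ ↔ IsHankel (Cb n u * H) ∧ (Cb n u * H)ᵀ = Cb n u * H :=
        ⟨fun h => ⟨isHankel_of_transpose_eq_self_of_rows_shift hH hrows h, h⟩, And.right⟩

/-- Corollary (Hankel similarity, bottom/right version): for an invertible Hankel `H`,
`u^J ∈ ker ∂H` iff `C_b(u)H` and `HC_r(u^J)` are Hankel and `C_b(u)H = HC_r(u^J)`. -/
theorem hankel_similarity_bottom_right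
    (n : ℕ) (hn : 2 ≤ n) (H : Matrix (Fin n) (Fin n) ℝ)
    (hHinv : IsUnit H.det) (hH : IsHankel H)
    (u : Fin (n + 1) → ℝ) (hu1 : u 0 ≠ 0) (hun : u (Fin.last n) ≠ 0) :
    (dH H).mulVec (revVec u) = 0 ↔
      (IsHankel (Cb n u * H) ∧ IsHankel (H * Cr n (revVec u)) ∧
        Cb n u * H = H * Cr n (revVec u)) :=
  hankel_similarity_bottom_right_general n H hH u hu1
end
end

section
/- Let n ≥ 2, let T be an invertible n×n real Toeplitz matrix, and let a, b ∈ ℝ^{n+1} be linearly independent vectors that span the kernel of ∂T. Then there exists a nonzero real number c such that B_T(a,b) = c·T⁻¹. -/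
open Matrix Polynomial

noncomputable section

/-!
Write `T i j = t (i - j)` and let `A`, `B` be the coefficient sequences of `a`, `b`. With
`β p q = A p * B q - B p * A q`, the entry `(j, l)` of `B_T(a,b)` is
`∑_{k ≤ min j l} β (j - k) (n + k - l)`. Hence `B_{j+1,l+1} = B_{j,l} + β (j+1) (n-l-1)`, the
first column is `β j n`, and, as the antidiagonal sums of the antisymmetric `β` vanish, the last
column is `β 0 (j+1)` and the last row is `-β n (n-1-l)`. The rows `∑ₚ t (r - p) u p = 0`
(`0 < r < n`) of `∂T u = 0` also kill `p ↦ β p q`. Together these make `T * B_T(a,b)` Toeplitz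
with first and last columns vanishing off the diagonal, i.e. equal to some `c • 1`.
If `c = 0` then `B_T(a,b) = 0`, its last column gives `b₀ a = a₀ b`, so `a₀ = b₀ = 0`; then
`T (a₁, …, a_n)` and `T (b₁, …, b_n)` are both multiples of the last unit vector, and
invertibility of `T` makes `a`, `b` dependent.
-/

open Finset

section BezoutianEntries

variable (A B : ℕ → ℝ)

def crossCoeff (p q : ℕ) : ℝ := A p * B q - B p * A q

def bezoutianEntry (n j l : ℕ) : ℝ :=
  ∑ k ∈ range (min j l + 1), crossCoeff A B (j - k) (n + k - l)

variable {A B}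

theorem crossCoeff_swap (p q : ℕ) : crossCoeff A B q p = -crossCoeff A B p q := by
  unfold crossCoeff; ring

theorem crossCoeff_self (p : ℕ) : crossCoeff A B p p = 0 := by
  unfold crossCoeff; ring

theorem sum_range_crossCoeff_antidiagonal (x m : ℕ) :
    ∑ k ∈ range (m + 1), crossCoeff A B (x + (m - k)) (x + k) = 0 := by
  have h := sum_range_reflect (fun k => crossCoeff A B (x + (m - k)) (x + k)) (m + 1)
  have h' : ∑ k ∈ range (m + 1), crossCoeff A B (x + (m - k)) (x + k)
      = ∑ k ∈ range (m + 1), -crossCoeff A B (x + (m - k)) (x + k) := by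
    rw [← h]
    refine sum_congr rfl fun k hk => ?_
    rw [mem_range] at hk
    rw [show m + 1 - 1 - k = m - k by omega, show m - (m - k) = k by omega, crossCoeff_swap]
  rw [sum_neg_distrib] at h'
  linarith

theorem bezoutianEntry_zero_right (n j : ℕ) :
    bezoutianEntry A B n j 0 = crossCoeff A B j n := by
  simp [bezoutianEntry]

theorem bezoutianEntry_zero_left (n l : ℕ) :
    bezoutianEntry A B n 0 l = crossCoeff A B 0 (n - l) := by
  simp [bezoutianEntry]

theorem bezoutianEntry_succ_succ (n j l : ℕ) :
    bezoutianEntry A B n (j + 1) (l + 1)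
      = crossCoeff A B (j + 1) (n - (l + 1)) + bezoutianEntry A B n j l := by
  rw [bezoutianEntry, Nat.add_min_add_right, sum_range_succ']
  simp only [add_zero, bezoutianEntry]
  rw [add_comm]
  congr 1
  refine sum_congr rfl fun k _ => ?_
  congr 1 <;> omega

theorem bezoutianEntry_last_col {n j : ℕ} (hj : j < n) :
    bezoutianEntry A B n j (n - 1) = crossCoeff A B 0 (j + 1) := by
  have h := sum_range_crossCoeff_antidiagonal (A := A) (B := B) 0 (j + 1)
  rw [sum_range_succ'] at h
  rw [bezoutianEntry, min_eq_left (by omega), crossCoeff_swap, eq_neg_iff_add_eq_zero, ← h]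
  simp only [zero_add, Nat.sub_zero]
  congr 1
  refine sum_congr rfl fun k hk => ?_
  rw [mem_range] at hk
  congr 1 <;> omega

theorem bezoutianEntry_last_row {n l : ℕ} (hl : l < n) :
    bezoutianEntry A B n (n - 1) l = -crossCoeff A B n (n - 1 - l) := by
  have h := sum_range_crossCoeff_antidiagonal (A := A) (B := B) (n - 1 - l) (l + 1)
  rw [sum_range_succ'] at h
  rw [bezoutianEntry, min_eq_right (by omega), eq_neg_iff_add_eq_zero, ← h]
  congr 1
  · refine sum_congr rfl fun k hk => ?_
    rw [mem_range] at hk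
    congr 1 <;> omega
  · congr 1; omega

end BezoutianEntries

section SymbolSums

variable {t : ℤ → ℝ} {n : ℕ} {A B : ℕ → ℝ}
  (hA : ∀ r : ℕ, 0 < r → r < n → ∑ p ∈ range (n + 1), t (r - p) * A p = 0)
  (hB : ∀ r : ℕ, 0 < r → r < n → ∑ p ∈ range (n + 1), t (r - p) * B p = 0)
include hA hB

theorem sum_symbol_mul_crossCoeff_eq_zero {r : ℕ} (hr : 0 < r) (hrn : r < n) (q : ℕ) :
    ∑ p ∈ range (n + 1), t (r - p) * crossCoeff A B p q = 0 := by
  have h : ∑ p ∈ range (n + 1), t (r - p) * crossCoeff A B p q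
      = (∑ p ∈ range (n + 1), t (r - p) * A p) * B q
        - (∑ p ∈ range (n + 1), t (r - p) * B p) * A q := by
    simp only [sum_mul, ← sum_sub_distrib, crossCoeff]
    exact sum_congr rfl fun p _ => by ring
  rw [h, hA r hr hrn, hB r hr hrn]
  ring

theorem sum_symbol_mul_bezoutianEntry_succ_succ {i l : ℕ} (hi : i + 1 < n) (hl : l < n) :
    ∑ j ∈ range n, t ((i + 1 : ℕ) - j) * bezoutianEntry A B n j (l + 1)
      = ∑ j ∈ range n, t (i - j) * bezoutianEntry A B n j l := by
  obtain ⟨m, rfl⟩ : ∃ m, n = m + 1 := ⟨n - 1, by omega⟩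
  have hker := sum_symbol_mul_crossCoeff_eq_zero hA hB (r := i + 1) (by omega) hi (m - l)
  have hshift : ∀ j : ℕ, t ((i + 1 : ℕ) - (j + 1 : ℕ)) = t (i - j) := fun j => by
    congr 1; push_cast; ring
  rw [sum_range_succ, sum_range_succ'] at hker
  conv_lhs => rw [sum_range_succ']
  conv_rhs => rw [sum_range_succ]
  have hlast := bezoutianEntry_last_row (A := A) (B := B) hl
  rw [Nat.add_sub_cancel] at hlast
  simp only [hshift, bezoutianEntry_succ_succ, bezoutianEntry_zero_left, mul_add, sum_add_distrib,
    show m + 1 - (l + 1) = m - l by omega] at hker ⊢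
  rw [hlast]
  linarith

theorem sum_symbol_mul_bezoutianEntry_zero_right {i : ℕ} (hi : 0 < i) (hin : i < n) :
    ∑ j ∈ range n, t (i - j) * bezoutianEntry A B n j 0 = 0 := by
  have hker := sum_symbol_mul_crossCoeff_eq_zero hA hB hi hin n
  rw [sum_range_succ, crossCoeff_self, mul_zero, add_zero] at hker
  simpa only [bezoutianEntry_zero_right] using hker

theorem sum_symbol_mul_bezoutianEntry_last_col {i : ℕ} (hi : i + 1 < n) :
    ∑ j ∈ range n, t (i - j) * bezoutianEntry A B n j (n - 1) = 0 := by
  have hker := sum_symbol_mul_crossCoeff_eq_zero hA hB (r := i + 1) (by omega) hi 0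
  rw [sum_range_succ', crossCoeff_self, mul_zero, add_zero] at hker
  rw [← neg_eq_zero, ← hker, ← sum_neg_distrib]
  refine sum_congr rfl fun j hj => ?_
  rw [bezoutianEntry_last_col (mem_range.1 hj), crossCoeff_swap 0, mul_neg]
  congr 3
  push_cast
  ring

end SymbolSums

namespace IsToeplitz

variable {n : ℕ} {M : Matrix (Fin n) (Fin n) ℝ}

theorem apply_add_add (hM : IsToeplitz M) (i j : Fin n) (d : ℕ) (hi : i + d < n)
    (hj : j + d < n) : M ⟨i + d, hi⟩ ⟨j + d, hj⟩ = M i j := by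
  induction d with
  | zero => rfl
  | succ d ih =>
    exact (hM ⟨i + d, by omega⟩ ⟨j + d, by omega⟩ (by simp; omega) (by simp; omega)).trans
      (ih _ _)

theorem apply_eq_apply (hM : IsToeplitz M) {i j i' j' : Fin n} (h : (i : ℤ) - j = i' - j') :
    M i j = M i' j' := by
  wlog hii : (i : ℕ) ≤ i' generalizing i j i' j'
  · exact (this h.symm (by omega)).symm
  have := hM.apply_add_add i j (i' - i) (by omega) (by omega)
  convert this.symm using 2 <;> ext <;> simp <;> omega

theorem exists_symbol (hM : IsToeplitz M) : ∃ t : ℤ → ℝ, ∀ i j, M i j = t (i - j) := by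
  classical
  refine ⟨fun k => if h : ∃ p : Fin n × Fin n, (p.1 : ℤ) - p.2 = k
    then M h.choose.1 h.choose.2 else 0, fun i j => ?_⟩
  have h : ∃ p : Fin n × Fin n, (p.1 : ℤ) - p.2 = i - j := ⟨(i, j), rfl⟩
  dsimp only
  rw [dif_pos h]
  exact hM.apply_eq_apply h.choose_spec.symm

theorem exists_eq_smul_one (hM : IsToeplitz M)
    (hfirst : ∀ i j : Fin n, (j : ℕ) = 0 → i ≠ j → M i j = 0)
    (hlast : ∀ i j : Fin n, (j : ℕ) = n - 1 → i ≠ j → M i j = 0) :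
    ∃ c : ℝ, M = c • 1 := by
  rcases Nat.eq_zero_or_pos n with rfl | hn
  · exact ⟨0, Subsingleton.elim _ _⟩
  refine ⟨M ⟨0, hn⟩ ⟨0, hn⟩, Matrix.ext fun i j => ?_⟩
  rcases lt_trichotomy i j with h | rfl | h
  · rw [hM.apply_eq_apply (i' := ⟨i + (n - 1 - j), by omega⟩) (j' := ⟨n - 1, by omega⟩)
      (by push_cast [Fin.lt_def] at h ⊢; omega)]
    rw [hlast _ _ rfl (by simp [Fin.ext_iff]; omega)]
    simp [h.ne]
  · rw [hM.apply_eq_apply (i' := ⟨0, hn⟩) (j' := ⟨0, hn⟩) (by simp)]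
    simp
  · rw [hM.apply_eq_apply (i' := ⟨i - j, by omega⟩) (j' := ⟨0, hn⟩)
      (by push_cast [Fin.lt_def] at h ⊢; omega)]
    rw [hfirst _ _ rfl (by simp [Fin.ext_iff]; omega)]
    simp [h.ne']

end IsToeplitz

theorem coeff_polyOf_of_lt {m : ℕ} (u : Fin m → ℝ) {i : ℕ} (hi : i < m) :
    (polyOf u).coeff i = u ⟨i, hi⟩ := by
  simp only [polyOf, Polynomial.finsetSum_coeff, Polynomial.coeff_C_mul, Polynomial.coeff_X_pow,
    mul_ite, mul_one, mul_zero]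
  rw [sum_eq_single ⟨i, hi⟩ (fun x _ hx => if_neg fun h => hx (Fin.ext h.symm)) (by simp)]
  simp

section Bezoutian

variable {n : ℕ} (a b : Fin (n + 1) → ℝ)

theorem Uplus_apply_eq_ite (j k : Fin n) :
    Uplus n a j k = if (k : ℕ) ≤ j then (polyOf a).coeff (j - k) else 0 := by
  simp only [Uplus, Matrix.of_apply]
  split_ifs with h
  · rw [coeff_polyOf_of_lt a (by omega)]
  · rfl

theorem Uminus_apply_eq_ite (k l : Fin n) :
    Uminus n a k l = if (k : ℕ) ≤ l then (polyOf a).coeff (n + k - l) else 0 := by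
  simp only [Uminus, Matrix.of_apply]
  split_ifs with h
  · rw [coeff_polyOf_of_lt a (by omega)]
  · rfl

theorem BT_apply (j l : Fin n) :
    BT n a b j l = bezoutianEntry (polyOf a).coeff (polyOf b).coeff n j l := by
  simp only [BT, Matrix.sub_apply, Matrix.mul_apply, ← sum_sub_distrib, Uplus_apply_eq_ite,
    Uminus_apply_eq_ite]
  let g : ℕ → ℝ := fun k => if k ≤ j ∧ k ≤ l then
    crossCoeff (polyOf a).coeff (polyOf b).coeff (j - k) (n + k - l) else 0
  refine (sum_congr rfl fun (k : Fin n) _ => (?_ : _ = g k)).trans ?_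
  · by_cases hj : (k : ℕ) ≤ j <;> by_cases hl : (k : ℕ) ≤ l <;>
      simp [g, crossCoeff, hj, hl]
  rw [Fin.sum_univ_eq_sum_range g, ← sum_filter, bezoutianEntry]
  congr 1
  ext k
  simp only [mem_filter, mem_range]
  omega

end Bezoutian

section DerivedMatrix

variable {n : ℕ} {T : Matrix (Fin n) (Fin n) ℝ}

theorem dT_mulVec_apply (u : Fin (n + 1) → ℝ) (i : Fin (n - 1)) :
    (dT T *ᵥ u) i = T ⟨i + 1, by omega⟩ ⟨0, by have := i.isLt; omega⟩ * u 0
      + (T *ᵥ Fin.tail u) ⟨i, by omega⟩ := by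
  simp [mulVec, dotProduct, Fin.sum_univ_succ, dT, Fin.tail]

variable {t : ℤ → ℝ} (ht : ∀ i j, T i j = t (i - j))
include ht

theorem dT_apply_of_symbol (i : Fin (n - 1)) (j : Fin (n + 1)) :
    dT T i j = t (i + 1 - j) := by
  simp only [dT, Matrix.of_apply]
  split_ifs with h
  · rw [ht, h]; simp
  · rw [ht]; congr 1; push_cast [Nat.cast_sub (show 1 ≤ (j : ℕ) by omega)]; ring

theorem sum_symbol_mul_coeff_polyOf_eq_zero {u : Fin (n + 1) → ℝ} (hu : dT T *ᵥ u = 0)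
    (r : ℕ) (hr : 0 < r) (hrn : r < n) :
    ∑ p ∈ range (n + 1), t (r - p) * (polyOf u).coeff p = 0 := by
  have h := congrFun hu ⟨r - 1, by omega⟩
  simp only [mulVec, dotProduct, dT_apply_of_symbol ht, Pi.zero_apply] at h
  rw [← h, ← Fin.sum_univ_eq_sum_range]
  refine sum_congr rfl fun p _ => ?_
  rw [coeff_polyOf_of_lt u p.isLt]
  congr 2
  push_cast [Nat.cast_sub (show 1 ≤ r by omega)]
  ring

theorem mul_BT_apply (a b : Fin (n + 1) → ℝ) (i l : Fin n) :
    (T * BT n a b) i l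
      = ∑ j ∈ range n, t (i - j) * bezoutianEntry (polyOf a).coeff (polyOf b).coeff n j l := by
  simp only [Matrix.mul_apply, ht, BT_apply]
  exact Fin.sum_univ_eq_sum_range (fun j => t (i - j) * bezoutianEntry _ _ n j l) n

end DerivedMatrix

section Product

variable {n : ℕ} {T : Matrix (Fin n) (Fin n) ℝ} {a b : Fin (n + 1) → ℝ}

theorem IsToeplitz.mul_BT (hT : IsToeplitz T) (ha : dT T *ᵥ a = 0) (hb : dT T *ᵥ b = 0) :
    IsToeplitz (T * BT n a b) := by
  obtain ⟨t, ht⟩ := hT.exists_symbol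
  intro i l hi hl
  rw [mul_BT_apply ht, mul_BT_apply ht]
  exact sum_symbol_mul_bezoutianEntry_succ_succ (sum_symbol_mul_coeff_polyOf_eq_zero ht ha)
    (sum_symbol_mul_coeff_polyOf_eq_zero ht hb) hi (by omega)

theorem IsToeplitz.exists_mul_BT_eq_smul_one (hT : IsToeplitz T) (ha : dT T *ᵥ a = 0)
    (hb : dT T *ᵥ b = 0) : ∃ c : ℝ, T * BT n a b = c • 1 := by
  obtain ⟨t, ht⟩ := hT.exists_symbol
  have hA := sum_symbol_mul_coeff_polyOf_eq_zero ht ha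
  have hB := sum_symbol_mul_coeff_polyOf_eq_zero ht hb
  refine (hT.mul_BT ha hb).exists_eq_smul_one (fun i j hj hij => ?_) (fun i j hj hij => ?_)
  · rw [mul_BT_apply ht, hj]
    exact sum_symbol_mul_bezoutianEntry_zero_right hA hB
      (Nat.pos_of_ne_zero fun h => hij (Fin.ext (h.trans hj.symm))) i.isLt
  · rw [mul_BT_apply ht, hj]
    exact sum_symbol_mul_bezoutianEntry_last_col hA hB (by have := Fin.val_ne_of_ne hij; omega)

theorem BT_apply_of_eq_last (j l : Fin n) (hl : (l : ℕ) = n - 1) :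
    BT n a b j l = a 0 * b j.succ - b 0 * a j.succ := by
  rw [BT_apply, hl, bezoutianEntry_last_col j.isLt, crossCoeff,
    coeff_polyOf_of_lt _ (show 0 < n + 1 by omega), coeff_polyOf_of_lt _ (show 0 < n + 1 by omega),
    coeff_polyOf_of_lt _ (show (j : ℕ) + 1 < n + 1 by omega),
    coeff_polyOf_of_lt _ (show (j : ℕ) + 1 < n + 1 by omega)]
  rfl

theorem head_eq_zero_of_BT_eq_zero (hn : 0 < n) (hli : LinearIndependent ℝ ![a, b])
    (h : BT n a b = 0) : a 0 = 0 ∧ b 0 = 0 := by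
  have hcomb : (-b 0) • a + a 0 • b = 0 := by
    funext k
    refine Fin.cases (by simp only [Pi.add_apply, Pi.smul_apply, smul_eq_mul, Pi.zero_apply]; ring)
      (fun j => ?_) k
    have hj := congrFun (congrFun h j) ⟨n - 1, by omega⟩
    rw [BT_apply_of_eq_last j _ rfl] at hj
    simp only [Pi.add_apply, Pi.smul_apply, smul_eq_mul, Pi.zero_apply, Matrix.zero_apply]
      at hj ⊢
    linarith
  obtain ⟨h1, h2⟩ := LinearIndependent.pair_iff.1 hli _ _ hcomb
  exact ⟨h2, neg_eq_zero.1 h1⟩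

theorem eq_zero_of_dT_mulVec_eq_zero (hT : IsUnit T.det) (hn : 0 < n)
    {u : Fin (n + 1) → ℝ}
    (hu : dT T *ᵥ u = 0) (h0 : u 0 = 0) (hlast : (T *ᵥ Fin.tail u) ⟨n - 1, by omega⟩ = 0) :
    u = 0 := by
  have htail : T *ᵥ Fin.tail u = 0 := by
    funext i
    by_cases hi : (i : ℕ) < n - 1
    · have h := congrFun hu ⟨i, hi⟩
      rwa [dT_mulVec_apply, h0, mul_zero, zero_add] at h
    · rw [show i = ⟨n - 1, by omega⟩ from Fin.ext (by have := i.isLt; simp only; omega)]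
      exact hlast
  have hinj := Matrix.mulVec_injective_iff_isUnit.2 ((Matrix.isUnit_iff_isUnit_det T).2 hT)
  have htail' : Fin.tail u = 0 := hinj (htail.trans (mulVec_zero T).symm)
  funext k
  exact Fin.cases h0 (congrFun htail') k

theorem not_linearIndependent_of_head_eq_zero (hT : IsUnit T.det) (hn : 0 < n)
    (ha : dT T *ᵥ a = 0) (hb : dT T *ᵥ b = 0) (ha0 : a 0 = 0) (hb0 : b 0 = 0) :
    ¬LinearIndependent ℝ ![a, b] := by
  intro hli
  set α := (T *ᵥ Fin.tail a) ⟨n - 1, by omega⟩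
  set β := (T *ᵥ Fin.tail b) ⟨n - 1, by omega⟩
  have hw : β • a - α • b = 0 := by
    refine eq_zero_of_dT_mulVec_eq_zero hT hn ?_ (by simp [ha0, hb0]) ?_
    · rw [mulVec_sub, mulVec_smul, mulVec_smul, ha, hb, smul_zero, smul_zero, sub_zero]
    · change (T *ᵥ (β • Fin.tail a - α • Fin.tail b)) _ = 0
      rw [mulVec_sub, mulVec_smul, mulVec_smul, Pi.sub_apply, Pi.smul_apply, Pi.smul_apply,
        smul_eq_mul, smul_eq_mul, mul_comm, sub_self]
  obtain ⟨-, hα⟩ :=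
    LinearIndependent.pair_iff.1 hli β (-α) (by rwa [neg_smul, ← sub_eq_add_neg])
  exact hli.ne_zero 0 (eq_zero_of_dT_mulVec_eq_zero hT hn ha ha0 (neg_eq_zero.1 hα))

end Product

/-- If `{a, b}` is a basis of the kernel of `∂T` for an invertible Toeplitz matrix `T`,
then the Toeplitz Bezoutian `B_T(a,b)` is a nonzero scalar multiple of `T⁻¹`. -/
theorem toeplitz_bezoutian_inverse
    (n : ℕ) (hn : 2 ≤ n) (T : Matrix (Fin n) (Fin n) ℝ)
    (hTinv : IsUnit T.det) (hT : IsToeplitz T)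
    (a b : Fin (n + 1) → ℝ)
    (hli : LinearIndependent ℝ ![a, b])
    (hspan : Submodule.span ℝ {a, b} = LinearMap.ker (Matrix.mulVecLin (dT T))) :
    ∃ c : ℝ, c ≠ 0 ∧ BT n a b = c • T⁻¹ := by
  have hn₀ : 0 < n := by omega
  have hker : ∀ u ∈ ({a, b} : Set (Fin (n + 1) → ℝ)), dT T *ᵥ u = 0 := fun u hu => by
    simpa using (hspan ▸ Submodule.subset_span hu : u ∈ LinearMap.ker (dT T).mulVecLin)
  have ha := hker a (by simp)
  have hb := hker b (by simp)
  obtain ⟨c, hc⟩ := hT.exists_mul_BT_eq_smul_one ha hb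
  refine ⟨c, ?_, ?_⟩
  · rintro rfl
    have hB : BT n a b = 0 :=
      ((Matrix.isUnit_iff_isUnit_det T).2 hTinv).mul_right_eq_zero.1 (by rw [hc, zero_smul])
    obtain ⟨ha0, hb0⟩ := head_eq_zero_of_BT_eq_zero hn₀ hli hB
    exact not_linearIndependent_of_head_eq_zero hTinv hn₀ ha hb ha0 hb0 hli
  · calc BT n a b = T⁻¹ * (T * BT n a b) := by
          rw [← Matrix.mul_assoc, nonsing_inv_mul T hTinv, Matrix.one_mul]
      _ = c • T⁻¹ := by rw [hc, Matrix.mul_smul, Matrix.mul_one]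
end
end

section
/- Let n ≥ 2, let u = (u₁,…,u_{n+1}) ∈ ℝ^{n+1} with u₁ ≠ 0 and u_{n+1} ≠ 0, let A be an invertible n×n real matrix, and let s ≥ t be integers with r = s − t > 0. Let M be the n×(n+r) real matrix whose first n columns form the matrix A·C_r(u)^t and whose (n+i)-th column, for each 1 ≤ i ≤ r, equals the last column of A·C_r(u)^{t+i}. Then M has rank n, and the vectors e₁,…,e_r form a basis of the kernel of M, where e_i ∈ ℝ^{n+r} is the vector with (e_i)_{i+m−1} = u_m for 1 ≤ m ≤ n+1 and all other entries zero. In particular M·e_i = 0 for each i. -/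
open Matrix Polynomial

noncomputable section

/-!
Write `C = C_r(u)`, `B = A Cᵗ` and `δ_j` for the standard basis vectors of `ℝⁿ`. Since
`Cᵐ δ₁ = δ_{m+1}` for `m < n`, the `q`-th column of `M` is `B C^q δ₁` for every `q`: for `q < n`
this is a column of `B`, and the last column of `A C^{t+i}` is `B C^i C^{n-1} δ₁`. The companion
matrix is annihilated by its polynomial, `u(C) = 0`, so `M eᵢ = B C^{i-1} u(C) δ₁ = 0`. The first
`n` columns of `M` form the invertible `B`, so `M` has rank `n` and a kernel of dimension `r`; the
`eᵢ` are independent because they are in echelon form with pivots `u₁ ≠ 0`, hence they are a basis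
of the kernel.
-/

section PolyOf

variable {m : ℕ} (u : Fin (m + 1) → ℝ)

theorem polyOf_coeff_zero : (polyOf u).coeff 0 = u 0 := by
  simp [polyOf, Fin.sum_univ_succ]

theorem aeval_polyOf {A : Type*} [Semiring A] [Algebra ℝ A] (a : A) :
    aeval a (polyOf u) = ∑ i, u i • a ^ (i : ℕ) := by
  simp [polyOf, Algebra.smul_def]

end PolyOf

theorem Matrix.isUnit_det_of_aeval_eq_zero {K ι : Type*} [Field K] [Fintype ι] [DecidableEq ι]
    {X : Matrix ι ι K} {p : K[X]} (hp : aeval X p = 0) (h0 : p.coeff 0 ≠ 0) :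
    IsUnit X.det := by
  obtain ⟨q, hq⟩ := X_dvd_sub_C (p := p)
  have hXq : X * aeval X q = -p.coeff 0 • 1 := by
    have := congrArg (aeval X) hq
    rw [map_sub, hp, aeval_C, map_mul, aeval_X, Algebra.algebraMap_eq_smul_one] at this
    rw [← this, zero_sub, neg_smul]
  refine isUnit_det_of_right_inverse (B := -(p.coeff 0)⁻¹ • aeval X q) ?_
  rw [Matrix.mul_smul, hXq, smul_smul, neg_mul_neg, inv_mul_cancel₀ h0, one_smul]

section Companion

variable {n : ℕ} (u : Fin (n + 1) → ℝ)

theorem Cr_mulVec_single_of_succ_lt {j : ℕ} (hj : j + 1 < n) :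
    Cr n u *ᵥ Pi.single ⟨j, by omega⟩ 1 = Pi.single ⟨j + 1, hj⟩ 1 := by
  ext i
  simp only [mulVec_single_one, col_apply, Cr, of_apply, Pi.single_apply, Fin.ext_iff]
  rw [if_neg (by omega)]

theorem Cr_pow_mulVec_single_zero {m : ℕ} (hm : m < n) :
    Cr n u ^ m *ᵥ Pi.single ⟨0, by omega⟩ 1 = Pi.single ⟨m, hm⟩ 1 := by
  induction m with
  | zero => rw [pow_zero, one_mulVec]
  | succ m ih => rw [pow_succ', ← mulVec_mulVec, ih (by omega), Cr_mulVec_single_of_succ_lt]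

theorem Cr_mulVec_single_last (hn : 0 < n) :
    Cr n u *ᵥ Pi.single ⟨n - 1, by omega⟩ 1 = fun i => -u i.castSucc / u (Fin.last n) := by
  ext i
  simp only [Cr, mulVec_single_one, col_apply, of_apply, ↓reduceIte]
  rfl

theorem aeval_Cr_polyOf_mulVec_single_zero (hun : u (Fin.last n) ≠ 0) (hn : 0 < n) :
    aeval (Cr n u) (polyOf u) *ᵥ Pi.single ⟨0, hn⟩ 1 = 0 := by
  have hpow : ∀ m : Fin n, Cr n u ^ (m : ℕ) *ᵥ Pi.single ⟨0, hn⟩ 1 = Pi.single m 1 :=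
    fun m => Cr_pow_mulVec_single_zero u m.isLt
  have htop : Cr n u ^ n *ᵥ Pi.single ⟨0, hn⟩ 1 = fun i => -u i.castSucc / u (Fin.last n) := by
    rw [show Cr n u ^ n = Cr n u * Cr n u ^ (n - 1) by rw [← pow_succ', Nat.sub_add_cancel hn],
      ← mulVec_mulVec, Cr_pow_mulVec_single_zero u (by omega), Cr_mulVec_single_last u hn]
  rw [aeval_polyOf, sum_mulVec, Fin.sum_univ_castSucc]
  simp only [smul_mulVec, Fin.val_castSucc, hpow, Fin.val_last, htop]
  ext i
  simp only [Pi.add_apply, Finset.sum_apply, Pi.smul_apply, Pi.single_apply, smul_eq_mul, mul_ite,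
    mul_one, mul_zero, Finset.sum_ite_eq, Finset.mem_univ, ↓reduceIte, Pi.zero_apply]
  field_simp
  ring

theorem aeval_Cr_polyOf (hun : u (Fin.last n) ≠ 0) : aeval (Cr n u) (polyOf u) = 0 := by
  refine ext_of_mulVec_single fun j => ?_
  have hcomm : aeval (Cr n u) (polyOf u) * Cr n u ^ (j : ℕ) =
      Cr n u ^ (j : ℕ) * aeval (Cr n u) (polyOf u) := by
    simpa using ((Commute.all (polyOf u) (X ^ (j : ℕ))).map (aeval (Cr n u))).eq
  rw [zero_mulVec, ← Cr_pow_mulVec_single_zero u j.isLt, mulVec_mulVec, hcomm,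
    ← mulVec_mulVec, aeval_Cr_polyOf_mulVec_single_zero u hun, mulVec_zero]

theorem isUnit_det_Cr (hu1 : u 0 ≠ 0) (hun : u (Fin.last n) ≠ 0) : IsUnit (Cr n u).det :=
  isUnit_det_of_aeval_eq_zero (aeval_Cr_polyOf u hun) (by rwa [polyOf_coeff_zero])

end Companion

section LinearAlgebra

variable {K : Type*} [Field K]

theorem Matrix.rank_eq_card_of_isUnit_det_submatrix {m κ : Type*} [Fintype m] [DecidableEq m]
    [Fintype κ] (M : Matrix m κ K) (f : m → κ) (h : IsUnit (M.submatrix id f).det) :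
    M.rank = Fintype.card m :=
  le_antisymm M.rank_le_card_height <| by
    simpa [rank_of_isUnit _ ((isUnit_iff_isUnit_det _).2 h)] using M.rank_submatrix_le id f

theorem Matrix.span_range_eq_ker_of_linearIndependent {m κ ι : Type*} [Fintype m] [Fintype κ]
    [Fintype ι] (M : Matrix m κ K) {v : ι → κ → K} (hv : LinearIndependent K v)
    (hMv : ∀ i, M *ᵥ v i = 0) (hcard : M.rank + Fintype.card ι = Fintype.card κ) :
    Submodule.span K (Set.range v) = LinearMap.ker M.mulVecLin := by
  refine Submodule.eq_of_le_of_finrank_le ?_ ?_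
  · rw [Submodule.span_le]
    rintro _ ⟨i, rfl⟩
    exact hMv i
  · have := LinearMap.finrank_range_add_finrank_ker M.mulVecLin
    rw [Module.finrank_fintype_fun_eq_card] at this
    rw [finrank_span_eq_card hv]
    rw [rank] at hcard
    omega

theorem linearIndependent_of_lt_eq_zero {r k : ℕ} {v : Fin r → Fin k → K} (hrk : r ≤ k)
    (hzero : ∀ i j, j.val < i.val → v i j = 0) (hdiag : ∀ i, v i (Fin.castLE hrk i) ≠ 0) :
    LinearIndependent K v := by
  set E : Matrix (Fin r) (Fin r) K := (of v).submatrix id (Fin.castLE hrk)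
  have hE : E.IsUpperTriangular := fun i j hji => hzero i _ hji
  have hdet : IsUnit E.det := by
    simpa [det_of_isUpperTriangular hE, Finset.prod_ne_zero_iff, E] using fun i => hdiag i
  exact LinearIndependent.of_comp (LinearMap.funLeft K K (Fin.castLE hrk))
    (linearIndependent_rows_of_isUnit ((isUnit_iff_isUnit_det E).2 hdet))

end LinearAlgebra

section Shift

variable {R : Type*} [Semiring R] {n r : ℕ}

def shiftVec (u : Fin (n + 1) → R) (i : Fin r) : Fin (n + r) → R := fun p =>
  if h : i.val ≤ p.val ∧ p.val ≤ i.val + n then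
    u ⟨p.val - i.val, Nat.lt_succ_of_le (Nat.sub_le_iff_le_add'.2 h.2)⟩
  else 0

theorem sum_mul_shiftVec (u : Fin (n + 1) → R) (i : Fin r) (f : Fin (n + r) → R) :
    ∑ q, f q * shiftVec u i q = ∑ m : Fin (n + 1), f ⟨i + m, by omega⟩ * u m := by
  symm
  refine Finset.sum_of_injOn (fun m => ⟨i + m, by omega⟩) ?_ (by simp) ?_ ?_
  · intro a _ b _ hab
    simpa [Fin.ext_iff] using hab
  · intro q _ hq
    have hout : ¬ (i.val ≤ q.val ∧ q.val ≤ i.val + n) := fun h =>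
      hq ⟨⟨q - i, by omega⟩, by simp, Fin.ext (by dsimp only; omega)⟩
    simp [shiftVec, hout]
  · intro m _
    simp [shiftVec, Nat.not_lt.2 (Nat.le_of_lt_succ m.isLt)]

/-- Proposition (kernel of the horizontal Toeplitz extension): the extension matrix
`M = [A C_r(u)^t | β₁ | ⋯ | β_r]` has rank `n` and its kernel has the shifted copies
of `u` as a basis. -/
theorem toeplitz_extension_kernel
    (n : ℕ) (hn : 2 ≤ n)
    (u : Fin (n + 1) → ℝ) (hu1 : u 0 ≠ 0) (hun : u (Fin.last n) ≠ 0)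
    (A : Matrix (Fin n) (Fin n) ℝ) (hA : IsUnit A.det)
    (t : ℤ) (r : ℕ)
    (M : Matrix (Fin n) (Fin (n + r)) ℝ)
    (hM : ∀ (p : Fin n) (q : Fin (n + r)),
      M p q = if h : q.val < n then (A * Cr n u ^ t) p ⟨q.val, h⟩
        else (A * Cr n u ^ (t + ((q.val - n + 1 : ℕ) : ℤ))) p ⟨n - 1, by omega⟩)
    (e : Fin r → Fin (n + r) → ℝ)
    (he : ∀ (i : Fin r) (p : Fin (n + r)),
      e i p = if h : i.val ≤ p.val ∧ p.val ≤ i.val + n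
        then u ⟨p.val - i.val, by omega⟩ else 0) :
    M.rank = n ∧ LinearIndependent ℝ e ∧
      Submodule.span ℝ (Set.range e) = LinearMap.ker M.mulVecLin ∧
      ∀ i : Fin r, M.mulVec (e i) = 0 := by
  have hC : IsUnit (Cr n u).det := isUnit_det_Cr u hu1 hun
  have hcol : ∀ p q, M p q = (A * Cr n u ^ t * Cr n u ^ (q : ℕ)) p ⟨0, p.pos⟩ := by
    intro p q
    have entry : ∀ (X : Matrix (Fin n) (Fin n) ℝ) j, X p j = (X *ᵥ Pi.single j 1) p := by simp
    rw [hM, entry (_ * _ ^ (q : ℕ)), ← mulVec_mulVec]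
    split_ifs with h
    · rw [Cr_pow_mulVec_single_zero u h, ← entry]
    · obtain ⟨k, hk⟩ : ∃ k, (q : ℕ) = k + (n - 1) := ⟨q - n + 1, by omega⟩
      rw [show (q : ℕ) - n + 1 = k by omega, hk, pow_add, ← mulVec_mulVec _ (_ ^ k),
        Cr_pow_mulVec_single_zero u (m := n - 1) (by omega), mulVec_mulVec, zpow_add hC,
        zpow_natCast, ← mul_assoc, entry (_ * _ ^ k)]
  have hrank : M.rank = n := by
    have hleft : M.submatrix id (Fin.castAdd r) = A * Cr n u ^ t := by ext; simp [hM]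
    simpa using M.rank_eq_card_of_isUnit_det_submatrix (Fin.castAdd r)
      (by rw [hleft, det_mul]; exact hA.mul (hC.det_zpow t))
  have hMe : ∀ i, M *ᵥ e i = 0 := by
    intro i
    ext p
    calc (M *ᵥ e i) p = ∑ m : Fin (n + 1), M p ⟨i + m, by omega⟩ * u m := by
          rw [funext (he i)]; exact sum_mul_shiftVec u i (M p)
      _ = (A * Cr n u ^ t * Cr n u ^ (i : ℕ) * aeval (Cr n u) (polyOf u)) p ⟨0, p.pos⟩ := by
          simp [hcol, aeval_polyOf, Finset.mul_sum, Matrix.sum_apply, pow_add, mul_assoc, mul_comm]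
      _ = 0 := by rw [aeval_Cr_polyOf u hun]; simp
  have hli : LinearIndependent ℝ e :=
    linearIndependent_of_lt_eq_zero (Nat.le_add_left r n)
      (fun i j hj => by rw [he, dif_neg (by omega)])
      (fun i => by rw [he, dif_pos (by simp)]; simpa using hu1)
  exact ⟨hrank, hli, M.span_range_eq_ker_of_linearIndependent hli hMe (by simp [hrank]), hMe⟩
end Shift
end
end

section
/- Let n ≥ 2, let H be an n×n real Hankel matrix, and let u = (u₁,…,u_{n+1}) ∈ ℝ^{n+1} with u₁ ≠ 0 and u_{n+1} ≠ 0. If the reversed vector u^J lies in the kernel of ∂H, then C_t(u)·H and C_b(u)·H are Hankel matrices and u^J lies in the kernel of ∂(C_t(u)·H) and in the kernel of ∂(C_b(u)·H). -/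
/-!
The kernel condition `∂H u^J = 0` says that the sequence `a_{1-n}, …, a_{n-1}` of `H` satisfies
the linear recurrence with coefficients `u` on each of its windows of length `n + 1`.
Since `u₁ ≠ 0` and `u_{n+1} ≠ 0`, the recurrence determines one further term at each end, and
the extended sequence satisfies it on every window. On Hankel matrices of such a sequence
`C_t(u)` and `C_b(u)` act as shifts by one term backwards and forwards, so `C_t(u) H` and
`C_b(u) H` are the Hankel matrices of the two shifted windows, which again satisfy the recurrence.
-/

open Matrix Polynomial

noncomputable section

/-- `hankel n a` has entries `a (i + j)`: `a m` is the paper's `a_{m-n+1}`. -/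
def hankel (n : ℕ) (a : ℕ → ℝ) : Matrix (Fin n) (Fin n) ℝ :=
  Matrix.of fun i j => a (i + j)

/-- `windowSum u a k = 0` is the linear recurrence with coefficients `u` on the terms
`a k, …, a (k + n)`. -/
def windowSum {n : ℕ} (u : Fin (n + 1) → ℝ) (a : ℕ → ℝ) (k : ℕ) : ℝ :=
  ∑ j : Fin (n + 1), a (k + j) * u j.rev

section

variable {n : ℕ}

theorem isHankel_hankel (a : ℕ → ℝ) : IsHankel (hankel n a) := by
  intro i j _ _
  exact congrArg a (by simp only; omega)

theorem IsHankel.exists_eq_hankel {H : Matrix (Fin n) (Fin n) ℝ} (hH : IsHankel H) :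
    ∃ a : ℕ → ℝ, H = hankel n a := by
  let a : ℕ → ℝ := fun m => if h : m < n then H ⟨0, by omega⟩ ⟨m, h⟩
    else if h' : m + 1 - n < n then H ⟨m + 1 - n, h'⟩ ⟨n - 1, by omega⟩ else 0
  suffices h : ∀ i (hi : i < n) j, H ⟨i, hi⟩ j = a (i + j) from
    ⟨a, by ext i j; exact h i i.isLt j⟩
  intro i
  induction i with
  | zero => intro hi j; simp [a, j.isLt]
  | succ i ih =>
    intro hi j
    by_cases hj : j.val + 1 < n
    · rw [hH ⟨i, by omega⟩ j hi hj, ih]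
      exact congrArg a (by simp only; omega)
    · have hj' : j.val = n - 1 := by omega
      have h₁ : ¬ i + 1 + j < n := by omega
      have h₂ : i + 1 + j + 1 - n < n := by omega
      simp only [a, dif_neg h₁, dif_pos h₂]
      congr 2
      · omega
      · ext; omega

theorem dH_hankel_mulVec_revVec (a : ℕ → ℝ) (u : Fin (n + 1) → ℝ) :
    dH (hankel n a) *ᵥ revVec u = fun i : Fin (n - 1) => windowSum u a i := by
  ext i
  simp only [mulVec, dotProduct, revVec, windowSum]
  refine Finset.sum_congr rfl fun (j : Fin (n + 1)) _ => congrArg (· * u j.rev) ?_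
  by_cases hj : j.val < n
  · simp [dH, hankel, hj]
  · have := i.isLt
    simp only [dH, hankel, of_apply, dif_neg hj]
    congr 1
    omega

theorem dH_hankel_mulVec_revVec_eq_zero_iff (a : ℕ → ℝ) (u : Fin (n + 1) → ℝ) :
    dH (hankel n a) *ᵥ revVec u = 0 ↔ ∀ k, k + 1 < n → windowSum u a k = 0 := by
  rw [dH_hankel_mulVec_revVec, funext_iff]
  exact ⟨fun h k hk => h ⟨k, by omega⟩, fun h i => h i (by omega)⟩

theorem windowSum_eq_add_sum (u : Fin (n + 1) → ℝ) (a : ℕ → ℝ) (k : ℕ) :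
    windowSum u a k =
      a k * u (Fin.last n) + ∑ m : Fin n, a (k + 1 + m) * u ⟨n - 1 - m, by omega⟩ := by
  rw [windowSum, Fin.sum_univ_succ]
  congr 1
  refine Finset.sum_congr rfl fun m _ => ?_
  congr 2
  · simp only [Fin.val_succ]; omega
  · ext; simp only [Fin.val_rev, Fin.val_succ]; omega

theorem windowSum_eq_sum_add (u : Fin (n + 1) → ℝ) (a : ℕ → ℝ) (k : ℕ) :
    windowSum u a k = ∑ m : Fin n, a (k + m) * u ⟨n - m, by omega⟩ + a (k + n) * u 0 := by
  rw [windowSum, Fin.sum_univ_castSucc]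
  congr 1
  · refine Finset.sum_congr rfl fun m _ => ?_
    congr 2
    ext; simp only [Fin.val_rev, Fin.val_castSucc]; omega
  · simp

theorem Ct_mul_hankel {u : Fin (n + 1) → ℝ} (hun : u (Fin.last n) ≠ 0) {a : ℕ → ℝ}
    (ha : ∀ k < n, windowSum u a k = 0) :
    Ct n u * hankel n (fun m => a (m + 1)) = hankel n a := by
  ext i j
  rw [mul_apply]
  by_cases hi : i.val = 0
  · have hwin := ha j j.isLt
    rw [windowSum_eq_add_sum] at hwin
    simp only [Ct, hankel, of_apply, hi, zero_add]
    calc ∑ k : Fin n, -u ⟨n - 1 - k, _⟩ / u (Fin.last n) * a (k + j + 1)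
        = -(∑ k : Fin n, a (j + 1 + k) * u ⟨n - 1 - k, by omega⟩) / u (Fin.last n) := by
          rw [neg_div, Finset.sum_div, ← Finset.sum_neg_distrib]
          refine Finset.sum_congr rfl fun k _ => ?_
          rw [show (k : ℕ) + j + 1 = j + 1 + k by ring]
          ring
      _ = a j := by
          rw [show ∑ k : Fin n, a (j + 1 + k) * u ⟨n - 1 - k, by omega⟩ =
            -(a j * u (Fin.last n)) by linarith]
          field_simp
  · rw [Finset.sum_eq_single ⟨i - 1, by omega⟩]
    · simp only [Ct, hankel, of_apply, if_neg hi]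
      rw [if_pos (by omega), one_mul]
      congr 1
      omega
    · intro k _ hk
      have : k.val + 1 ≠ i := fun h => hk (by ext; simp only; omega)
      simp [Ct, hi, this]
    · simp

theorem Cb_mul_hankel {u : Fin (n + 1) → ℝ} (hu0 : u 0 ≠ 0) {a : ℕ → ℝ}
    (ha : ∀ k < n, windowSum u a k = 0) :
    Cb n u * hankel n a = hankel n (fun m => a (m + 1)) := by
  ext i j
  rw [mul_apply]
  by_cases hi : i.val = n - 1
  · have hwin := ha j j.isLt
    rw [windowSum_eq_sum_add] at hwin
    simp only [Cb, hankel, of_apply, hi]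
    calc ∑ k : Fin n, -u ⟨n - k, _⟩ / u 0 * a (k + j)
        = -(∑ k : Fin n, a (j + k) * u ⟨n - k, by omega⟩) / u 0 := by
          rw [neg_div, Finset.sum_div, ← Finset.sum_neg_distrib]
          refine Finset.sum_congr rfl fun k _ => ?_
          rw [add_comm (k : ℕ)]
          ring
      _ = a (j + n) := by
          rw [show ∑ k : Fin n, a (j + k) * u ⟨n - k, by omega⟩ = -(a (j + n) * u 0) by
            linarith]
          field_simp
      _ = a (n - 1 + j + 1) := congrArg a (by omega)
  · have hi' : i.val + 1 < n := by omega
    rw [Finset.sum_eq_single ⟨i + 1, hi'⟩]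
    · simp only [Cb, hankel, of_apply, if_neg hi, if_true, one_mul]
      congr 1
      omega
    · intro k _ hk
      have : k.val ≠ i + 1 := fun h => hk (by ext; simp only; omega)
      simp [Cb, hi, this]
    · simp

theorem windowSum_congr {u : Fin (n + 1) → ℝ} {a b : ℕ → ℝ} {k l : ℕ}
    (h : ∀ j ≤ n, a (k + j) = b (l + j)) : windowSum u a k = windowSum u b l :=
  Finset.sum_congr rfl fun j _ => by rw [h j (by omega)]

theorem windowSum_comp_add (u : Fin (n + 1) → ℝ) (a : ℕ → ℝ) (s k : ℕ) :
    windowSum u (fun m => a (m + s)) k = windowSum u a (k + s) :=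
  windowSum_congr fun _ _ => congrArg a (by ring)

theorem windowSum_update (u : Fin (n + 1) → ℝ) (a : ℕ → ℝ) (k : ℕ) (j : Fin (n + 1))
    (c : ℝ) :
    windowSum u (Function.update a (k + j) c) k =
      windowSum u a k + (c - a (k + j)) * u j.rev := by
  simp only [windowSum, Function.update_apply, add_right_inj, Fin.val_inj]
  calc ∑ i : Fin (n + 1), (if i = j then c else a (k + i)) * u i.rev
      = ∑ i : Fin (n + 1),
          (a (k + i) * u i.rev + if i = j then (c - a (k + i)) * u i.rev else 0) :=
        Finset.sum_congr rfl fun i _ => by split_ifs <;> ring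
    _ = _ := by rw [Finset.sum_add_distrib, Finset.sum_ite_eq', if_pos (Finset.mem_univ j)]

theorem exists_windowSum_update_eq_zero {u : Fin (n + 1) → ℝ} {j : Fin (n + 1)}
    (hu : u j.rev ≠ 0) (a : ℕ → ℝ) (k : ℕ) :
    ∃ c, windowSum u (Function.update a (k + j) c) k = 0 :=
  ⟨a (k + j) - windowSum u a k / u j.rev, by rw [windowSum_update]; field_simp; ring⟩

theorem exists_recurrence_extension {u : Fin (n + 1) → ℝ} (hn : 0 < n) (hu0 : u 0 ≠ 0)
    (hun : u (Fin.last n) ≠ 0) {a : ℕ → ℝ} (ha : ∀ k, k + 1 < n → windowSum u a k = 0) :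
    ∃ e : ℕ → ℝ,
      hankel n (fun m => e (m + 1)) = hankel n a ∧ ∀ k ≤ n, windowSum u e k = 0 := by
  -- Shift `a` one place to the right, then choose the new terms at `0` and `2n`.
  obtain ⟨c₀, hc₀⟩ := exists_windowSum_update_eq_zero (j := 0) (by simpa using hun)
    (fun m => a (m - 1)) 0
  set e₀ := Function.update (fun m => a (m - 1)) (0 + (0 : Fin (n + 1))) c₀
  obtain ⟨c₁, hc₁⟩ :=
    exists_windowSum_update_eq_zero (j := Fin.last n) (by simpa using hu0) e₀ n
  set e := Function.update e₀ (n + Fin.last n) c₁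
  have he : ∀ m, 0 < m → m < n + n → e m = a (m - 1) := by
    intro m hm hm'
    simp [e, e₀, hm.ne', hm'.ne]
  refine ⟨e, ?_, fun k hk => ?_⟩
  · ext i j
    exact (he _ (by omega) (by omega)).trans (congrArg a (by omega))
  · rcases hk.lt_or_eq with hk | rfl
    · rcases k with _ | k
      · rw [← hc₀]
        refine windowSum_congr fun j hj => Function.update_of_ne ?_ _ _
        simp only [zero_add, Fin.val_last, ne_eq]
        omega
      · rw [← ha k (by omega)]
        exact windowSum_congr fun j hj =>
          (he _ (by omega) (by omega)).trans (congrArg a (by omega))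
    · exact hc₁

end

/-- Corollary (kernel shift, Hankel version): if `u^J ∈ ker ∂H` for a Hankel matrix `H`,
then `C_t(u)H` and `C_b(u)H` are Hankel and `u^J` lies in the kernels of
`∂(C_t(u)H)` and `∂(C_b(u)H)`. -/
theorem hankel_kernel_shift
    (n : ℕ) (hn : 2 ≤ n) (H : Matrix (Fin n) (Fin n) ℝ) (hH : IsHankel H)
    (u : Fin (n + 1) → ℝ) (hu1 : u 0 ≠ 0) (hun : u (Fin.last n) ≠ 0)
    (hker : (dH H).mulVec (revVec u) = 0) :
    IsHankel (Ct n u * H) ∧ IsHankel (Cb n u * H) ∧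
      (dH (Ct n u * H)).mulVec (revVec u) = 0 ∧
      (dH (Cb n u * H)).mulVec (revVec u) = 0 := by
  obtain ⟨a, rfl⟩ := hH.exists_eq_hankel
  rw [dH_hankel_mulVec_revVec_eq_zero_iff] at hker
  obtain ⟨e, hea, he⟩ := exists_recurrence_extension (by omega) hu1 hun hker
  rw [← hea]
  have hCt := Ct_mul_hankel hun fun k hk => he k hk.le
  have hCb := Cb_mul_hankel (a := fun m => e (m + 1)) hu1 fun k hk => by
    rw [windowSum_comp_add]
    exact he _ (by omega)
  rw [hCt, hCb, dH_hankel_mulVec_revVec_eq_zero_iff, dH_hankel_mulVec_revVec_eq_zero_iff]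
  refine ⟨isHankel_hankel _, isHankel_hankel _, fun k hk => he k (by omega), fun k hk => ?_⟩
  rw [windowSum_comp_add u (fun m => e (m + 1)), windowSum_comp_add]
  exact he _ (by omega)
end
end
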